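/- arXiv:2410.04647 — 5 statements merged into one kernel-verified Lean document; each statement's English description precedes it below -/
import Mathlib

section
/- Let α, β ∈ (0, π] and define the subspace S(α,β) := {(v₁,v₂,v₃,v₄) ∈ ℝ⁴ | cos(α)·v₁ + sin(α)·v₂ = 0 and cos(β)·v₃ − sin(β)·v₄ = 0}, and let σ : ℝ⁴ → ℝ⁴ be the reflection map σ(v₁,v₂,v₃,v₄) = (v₃,−v₄,v₁,−v₂). Then σ maps S(α,β) onto S(α,β) if and only if α = β. (This is the separated-boundary-condition part of Proposition 4.2: the self-adjoint extensions with separated boundary conditions invariant under reflection about the midpoint are exactly those with α = β.) -/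
/-!
The reflection is an involution, and it carries `S(α, β)` to `S(β, α)`, so the condition reads
`S(β, α) = S(α, β)`. Equality is clear when `α = β`. Conversely, `(sin α, -cos α, sin β, cos β)`
lies in `S(α, β)`, and it lies in `S(β, α)` exactly when `sin (α - β) = 0`; since
`α - β ∈ (-π, π)`, this forces `α = β`.
-/

open Real Set

def separatedBC (α β : ℝ) : Set (ℝ × ℝ × ℝ × ℝ) :=
  {v | cos α * v.1 + sin α * v.2.1 = 0 ∧ cos β * v.2.2.1 - sin β * v.2.2.2 = 0}

def midpointReflection (v : ℝ × ℝ × ℝ × ℝ) : ℝ × ℝ × ℝ × ℝ :=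
  (v.2.2.1, -v.2.2.2, v.1, -v.2.1)

theorem midpointReflection_involutive : Function.Involutive midpointReflection := fun v => by
  simp [midpointReflection]

theorem midpointReflection_mem_separatedBC_iff {α β : ℝ} {v : ℝ × ℝ × ℝ × ℝ} :
    midpointReflection v ∈ separatedBC α β ↔ v ∈ separatedBC β α := by
  simp only [separatedBC, midpointReflection, mem_ofPred_eq, mul_neg, sub_neg_eq_add,
    ← sub_eq_add_neg]
  exact and_comm

theorem image_midpointReflection_separatedBC (α β : ℝ) :
    midpointReflection '' separatedBC α β = separatedBC β α := by
  rw [image_eq_preimage_of_inverse midpointReflection_involutive midpointReflection_involutive]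
  ext v
  exact midpointReflection_mem_separatedBC_iff

theorem sin_sub_eq_zero_of_separatedBC_swap_eq {α β : ℝ}
    (h : separatedBC β α = separatedBC α β) : sin (α - β) = 0 := by
  have hw : (sin α, -cos α, sin β, cos β) ∈ separatedBC α β := ⟨by ring, by ring⟩
  rw [← h] at hw
  rw [sin_sub]
  linarith [hw.1]

theorem separatedBC_swap_eq_iff {α β : ℝ} (hα : α ∈ Ioc 0 π) (hβ : β ∈ Ioc 0 π) :
    separatedBC β α = separatedBC α β ↔ α = β := by
  refine ⟨fun h => ?_, fun h => h ▸ rfl⟩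
  have hsub : α - β = 0 :=
    (sin_eq_zero_iff_of_lt_of_lt (by linarith [hα.1, hβ.2]) (by linarith [hα.2, hβ.1])).1
      (sin_sub_eq_zero_of_separatedBC_swap_eq h)
  linarith

/-- Proposition 4.2 (separated boundary conditions): the reflection map
`σ(v₁,v₂,v₃,v₄) = (v₃,−v₄,v₁,−v₂)` maps the separated boundary-condition subspace
`S(α,β)` onto itself if and only if `α = β`. -/
theorem stmt_0 (α β : ℝ) (hα : α ∈ Set.Ioc 0 Real.pi) (hβ : β ∈ Set.Ioc 0 Real.pi) :
    ((fun v : ℝ × ℝ × ℝ × ℝ => (v.2.2.1, -v.2.2.2, v.1, -v.2.1)) ''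
        {v : ℝ × ℝ × ℝ × ℝ |
          Real.cos α * v.1 + Real.sin α * v.2.1 = 0 ∧
          Real.cos β * v.2.2.1 - Real.sin β * v.2.2.2 = 0} =
      {v : ℝ × ℝ × ℝ × ℝ |
          Real.cos α * v.1 + Real.sin α * v.2.1 = 0 ∧
          Real.cos β * v.2.2.1 - Real.sin β * v.2.2.2 = 0}) ↔
    α = β := by
  change midpointReflection '' separatedBC α β = separatedBC α β ↔ α = β
  rw [image_midpointReflection_separatedBC]
  exact separatedBC_swap_eq_iff hα hβ
end

section
/- Let η ∈ [0, π) and let R be a real 2×2 matrix with det(R) = 1. Let J be the complex 2×2 diagonal matrix diag(1, −1). Then the matrix equation e^{iη}·R = J · (e^{−iη}·R⁻¹) · J (with R and R⁻¹ regarded as complex matrices) holds if and only if η = 0 and R₁₁ = R₂₂. (This is the coupled-boundary-condition part of Proposition 4.2: the coupled self-adjoint extensions invariant under reflection about the midpoint are exactly those with η = 0 and equal diagonal entries of R.) -/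
/-!
With `J = diag(1, -1)` and `det R = 1`, the matrix `J R⁻¹ J` is `R` with its diagonal entries
swapped. Writing `z = e^{iη}`, the equation `z R = z̄ (J R⁻¹ J)` therefore splits into its real
part `cos η • R = cos η • R'` and imaginary part `sin η • R = -(sin η • R')`, where `R'` is `R`
with swapped diagonal. If `sin η ≠ 0` the imaginary part forces `R = -R'`, i.e. `R` is diagonal
with `R₁₁ = -R₂₂`, so `det R = -R₂₂² ≠ 1`. Hence `sin η = 0`, i.e. `η = 0` on `[0, π)`, and the
real part reduces to `R = R'`, i.e. `R₁₁ = R₂₂`.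
-/

open Matrix ComplexConjugate

namespace Matrix

variable {α : Type*}

def diagSwap (A : Matrix (Fin 2) (Fin 2) α) : Matrix (Fin 2) (Fin 2) α :=
  !![A 1 1, A 0 1; A 1 0, A 0 0]

theorem diagSwap_map {β : Type*} (A : Matrix (Fin 2) (Fin 2) α) (f : α → β) :
    (A.map f).diagSwap = A.diagSwap.map f := by
  ext i j
  fin_cases i <;> fin_cases j <;> rfl

theorem diagSwap_eq_self_iff (A : Matrix (Fin 2) (Fin 2) α) : A.diagSwap = A ↔ A 0 0 = A 1 1 := by
  refine ⟨fun h => by simpa [diagSwap] using (congrFun (congrFun h 0) 0).symm, fun h => ?_⟩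
  ext i j
  fin_cases i <;> fin_cases j <;> simp [diagSwap, h]

theorem diagonal_one_neg_one_mul_inv_mul_of_det_eq_one [CommRing α]
    {A : Matrix (Fin 2) (Fin 2) α} (hA : A.det = 1) :
    diagonal ![1, -1] * A⁻¹ * diagonal ![1, -1] = A.diagSwap := by
  rw [inv_def, hA, Ring.inverse_one, one_smul]
  ext i j
  fin_cases i <;> fin_cases j <;> simp [adjugate_fin_two, diagSwap]

theorem det_ne_one_of_eq_neg_diagSwap {R : Matrix (Fin 2) (Fin 2) ℝ} (h : R = -R.diagSwap) :
    R.det ≠ 1 := by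
  have h00 : R 0 0 = -R 1 1 := by simpa [diagSwap] using congrFun (congrFun h 0) 0
  have h01 : R 0 1 = -R 0 1 := by simpa [diagSwap] using congrFun (congrFun h 0) 1
  rw [det_fin_two, h00, show R 0 1 = 0 by linarith]
  nlinarith [sq_nonneg (R 1 1)]

theorem smul_map_ofReal_eq_conj_smul_map_ofReal_iff {m n : Type*} (z : ℂ) (A B : Matrix m n ℝ) :
    z • A.map Complex.ofReal = conj z • B.map Complex.ofReal ↔
      z.re • A = z.re • B ∧ z.im • A = -(z.im • B) := by
  simp only [← Matrix.ext_iff, Complex.ext_iff, smul_apply, map_apply, neg_apply, smul_eq_mul,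
    Complex.mul_re, Complex.mul_im, Complex.ofReal_re, Complex.ofReal_im, Complex.conj_re,
    Complex.conj_im, mul_zero, sub_zero, zero_add, neg_mul, forall_and]

theorem cos_smul_eq_and_sin_smul_eq_neg_diagSwap_iff {η : ℝ} (hη : η ∈ Set.Ico 0 Real.pi)
    {R : Matrix (Fin 2) (Fin 2) ℝ} (hR : R.det = 1) :
    Real.cos η • R = Real.cos η • R.diagSwap ∧ Real.sin η • R = -(Real.sin η • R.diagSwap) ↔
      η = 0 ∧ R 0 0 = R 1 1 := by
  rw [← diagSwap_eq_self_iff]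
  constructor
  · rintro ⟨hcos, hsin⟩
    have hη0 : η = 0 := by
      by_contra hne
      have hpos : 0 < Real.sin η :=
        Real.sin_pos_of_pos_of_lt_pi (lt_of_le_of_ne hη.1 (Ne.symm hne)) hη.2
      rw [← smul_neg] at hsin
      exact det_ne_one_of_eq_neg_diagSwap (smul_right_injective _ hpos.ne' hsin) hR
    rw [hη0, Real.cos_zero, one_smul, one_smul] at hcos
    exact ⟨hη0, hcos.symm⟩
  · rintro ⟨rfl, h⟩
    simp [h]

end Matrix

/-- Proposition 4.2 (coupled boundary conditions): for `η ∈ [0, π)` and `R ∈ SL(2,ℝ)`,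
the matrix equation `e^{iη} R = J (e^{-iη} R⁻¹) J` with `J = diag(1,-1)` holds
(over the complex numbers) if and only if `η = 0` and `R₁₁ = R₂₂`. -/
theorem stmt_1 (η : ℝ) (hη : η ∈ Set.Ico 0 Real.pi)
    (R : Matrix (Fin 2) (Fin 2) ℝ) (hR : R.det = 1) :
    (Complex.exp (η * Complex.I) • R.map Complex.ofReal =
        (Matrix.diagonal ![1, -1] : Matrix (Fin 2) (Fin 2) ℂ) *
          (Complex.exp (-(η : ℂ) * Complex.I) • (R.map Complex.ofReal)⁻¹) *
          (Matrix.diagonal ![1, -1] : Matrix (Fin 2) (Fin 2) ℂ)) ↔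
      (η = 0 ∧ R 0 0 = R 1 1) := by
  have hconj : Complex.exp (-(η : ℂ) * Complex.I) = conj (Complex.exp (η * Complex.I)) := by
    rw [← Complex.exp_conj]; simp
  have hdet : (R.map Complex.ofReal).det = 1 := by
    rw [show R.map Complex.ofReal = Complex.ofRealHom.mapMatrix R from rfl, ← RingHom.map_det,
      hR, map_one]
  rw [hconj, Matrix.mul_smul, Matrix.smul_mul, diagonal_one_neg_one_mul_inv_mul_of_det_eq_one hdet,
    diagSwap_map, smul_map_ofReal_eq_conj_smul_map_ofReal_iff, Complex.exp_ofReal_mul_I_re,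
    Complex.exp_ofReal_mul_I_im]
  exact cos_smul_eq_and_sin_smul_eq_neg_diagSwap_iff hη hR
end

section
/- Let θ, θ′, φ, φ′, R₁₁, R₁₂, R₂₁ be real numbers with θ·φ′ − θ′·φ = 1, R₁₁² − R₁₂·R₂₁ = 1, and R₁₂ ≠ 0. Then 2R₁₂·θθ′ + 2R₂₁·φφ′ − 4R₁₁·φθ′ − 2R₁₁ + 2 = −(2/R₁₂)·((R₁₁ + 1)·φ − R₁₂·θ)·(R₁₂·θ′ − (R₁₁ − 1)·φ′). (This is the Appendix factorization (4.22) of the characteristic function F_{0,R′}(z) of the symmetric coupled extension into −2(R₁₂/(sin α sin α′))·F^{(a,(b+a)/2)}_{α,π}(z)·F^{(a,(b+a)/2)}_{α′,π/2}(z) with cot(α) = (R₁₁+1)/R₁₂ and cot(α′) = (R₁₁−1)/R₁₂.) -/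
/-- Appendix factorization (4.22) of the characteristic function `F_{0,R′}(z)` of the
symmetric coupled extension: with Wronskian normalization `θφ′ − θ′φ = 1` and
`R ∈ SL(2,ℝ)` with equal diagonal entries (`R₁₁² − R₁₂R₂₁ = 1`), `R₁₂ ≠ 0`,
`F_{0,R′}(z) = −(2/R₁₂)((R₁₁+1)φ − R₁₂θ)(R₁₂θ′ − (R₁₁−1)φ′)`. -/
theorem stmt_13 (θ θ' φ φ' R11 R12 R21 : ℝ)
    (hW : θ * φ' - θ' * φ = 1) (hdet : R11 ^ 2 - R12 * R21 = 1) (h12 : R12 ≠ 0) :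
    2 * R12 * (θ * θ') + 2 * R21 * (φ * φ') - 4 * R11 * (φ * θ') - 2 * R11 + 2 =
      -(2 / R12) * ((R11 + 1) * φ - R12 * θ) * (R12 * θ' - (R11 - 1) * φ') := by
  field_simp
  linear_combination (2 * R12 * (R11 - 1)) * hW - 2 * φ * φ' * hdet
end

section
/- Let a < b be real numbers, γ ∈ [0,1), and let d(x) := min(x − a, b − x) denote the distance of x to the boundary of (a,b). Then there exists a constant C > 0 such that for every continuously differentiable function f : ℝ → ℝ whose support is a compact subset of (a,b), one has ∫ₐᵇ f′(x)² dx ≥ (1/4 − γ²)·∫ₐᵇ d(x)⁻²·f(x)² dx + C·∫ₐᵇ f(x)² dx. (This is the integral inequality (5.16) — with the explicit constant 4λ_{γ,1}²/(b−a)², where λ_{γ,1} is the first positive zero of G_γ(y) = y^{−γ}(J_γ(y) + 2y J_γ′(y)), replaced by the existence of a positive constant — which the paper derives from the decomposition of the Friedrichs extension of the symmetric Bessel-type operator into Dirichlet and mixed Dirichlet–Neumann half-interval extensions.) -/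
open Set MeasureTheory intervalIntegral

private lemma stmt17_ptwise (γ u v s : ℝ) (hu : 0 < u) (hv : 0 < v) (hs : u + v = s) :
    (1/4 - γ^2) * ((min u v)⁻¹)^2 + 2/s^2 ≤
      (1/2) * (((v⁻¹)^2) + ((u⁻¹)^2)) - ((1/2) * (v⁻¹ - u⁻¹))^2 := by
  have hp : 0 < u⁻¹ := inv_pos.2 hu
  have hq : 0 < v⁻¹ := inv_pos.2 hv
  have h1 : ((min u v)⁻¹)^2 ≤ (u⁻¹)^2 + (v⁻¹)^2 := by
    rcases min_choice u v with h | h <;> rw [h] <;> nlinarith [sq_nonneg u⁻¹, sq_nonneg v⁻¹]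
  have h2 : (1/4 - γ^2) * ((min u v)⁻¹)^2 ≤ (1/4) * ((u⁻¹)^2 + (v⁻¹)^2) := by
    nlinarith [sq_nonneg ((min u v)⁻¹), mul_nonneg (sq_nonneg γ) (sq_nonneg ((min u v)⁻¹))]
  have h3 : 2/s^2 ≤ (1/2) * (u⁻¹ * v⁻¹) := by
    subst hs
    rw [div_le_iff₀ (by positivity)]
    have huv : u * v * (u⁻¹ * v⁻¹) = 1 := by field_simp
    nlinarith [mul_nonneg (mul_pos hp hq).le (sq_nonneg (u - v))]
  nlinarith [h2, h3]

private lemma stmt17_zero_int (g : ℝ → ℝ) (c d : ℝ) (hcd : c ≤ d) (h : EqOn g 0 (Icc c d)) :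
    IntervalIntegrable g volume c d ∧ (∫ x in c..d, g x) = 0 := by
  constructor
  · rw [intervalIntegrable_iff_integrableOn_Ioc_of_le hcd]
    exact (integrableOn_zero).congr_fun
      (fun x hx => (h (Ioc_subset_Icc_self hx)).symm) measurableSet_Ioc
  · rw [intervalIntegral.integral_congr (g := fun _ => (0:ℝ))
      (by rwa [uIcc_of_le hcd])]
    simp

/-- The integral inequality (5.16) (with the optimal constant `4λ_{γ,1}²/(b−a)²`
replaced by the existence of a positive constant): for `γ ∈ [0,1)` there is `C > 0`
such that for every continuously differentiable `f : ℝ → ℝ` with compact support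
contained in `(a,b)`,
`∫ₐᵇ f′² ≥ (1/4 − γ²)∫ₐᵇ d(x)⁻² f² + C ∫ₐᵇ f²`,
where `d(x) = min(x−a, b−x)` is the distance to the boundary of `(a,b)`. -/
theorem stmt_17 (a b : ℝ) (hab : a < b) (γ : ℝ) (hγ : γ ∈ Set.Ico (0 : ℝ) 1) :
    ∃ C > (0 : ℝ), ∀ f : ℝ → ℝ, ContDiff ℝ 1 f → HasCompactSupport f →
      tsupport f ⊆ Set.Ioo a b →
      (∫ x in a..b, (deriv f x) ^ 2) ≥
        (1 / 4 - γ ^ 2) * (∫ x in a..b, (min (x - a) (b - x))⁻¹ ^ 2 * f x ^ 2) +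
          C * ∫ x in a..b, f x ^ 2 := by
  have hba : (0:ℝ) < b - a := sub_pos.2 hab
  refine ⟨2/(b-a)^2, by positivity, ?_⟩
  intro f hf hcs hsupp
  -- choose a compact subinterval strictly inside (a,b) containing the support
  obtain ⟨a', b', ha', hab', hb', hK⟩ :
      ∃ a' b', a < a' ∧ a' < b' ∧ b' < b ∧ tsupport f ⊆ Set.Ioo a' b' := by
    rcases Set.eq_empty_or_nonempty (tsupport f) with hKe | hKe
    · exact ⟨(3*a+b)/4, (a+3*b)/4, by linarith, by linarith, by linarith, by simp [hKe]⟩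
    · have h1 : sInf (tsupport f) ∈ tsupport f := hcs.sInf_mem hKe
      have h2 : sSup (tsupport f) ∈ tsupport f := hcs.sSup_mem hKe
      obtain ⟨h1a, h1b⟩ := hsupp h1
      obtain ⟨h2a, h2b⟩ := hsupp h2
      refine ⟨(a + sInf (tsupport f))/2, (sSup (tsupport f) + b)/2, by linarith, ?_, by linarith, ?_⟩
      · have : sInf (tsupport f) ≤ sSup (tsupport f) := csInf_le_csSup hKe hcs.bddBelow hcs.bddAbove
        linarith
      · intro x hx
        have hx1 : sInf (tsupport f) ≤ x := csInf_le hcs.bddBelow hx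
        have hx2 : x ≤ sSup (tsupport f) := le_csSup hcs.bddAbove hx
        exact ⟨by linarith, by linarith⟩
  have hfz : ∀ x, x ∉ Set.Ioo a' b' → f x = 0 := fun x hx =>
    image_eq_zero_of_notMem_tsupport (fun h => hx (hK h))
  have hdz : ∀ x, x ∉ Set.Ioo a' b' → deriv f x = 0 := by
    intro x hx
    by_contra h
    exact hx (hK (support_deriv_subset (Function.mem_support.2 h)))
  have hax : ∀ x ∈ Icc a' b', 0 < x - a := fun x hx => by
    have := hx.1; linarith
  have hbx : ∀ x ∈ Icc a' b', 0 < b - x := fun x hx => by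
    have := hx.2; linarith
  set φ : ℝ → ℝ := fun x => (1/2) * ((b - x)⁻¹ - (x - a)⁻¹) with hφdef
  set ψ : ℝ → ℝ := fun x => (1/2) * (((b - x)⁻¹)^2 + ((x - a)⁻¹)^2) with hψdef
  -- continuity facts on [a', b']
  have cfa : ContinuousOn (fun x => (x - a)⁻¹) (Icc a' b') :=
    (continuous_id.sub continuous_const).continuousOn.inv₀
      (fun x hx => ne_of_gt (hax x hx))
  have cfb : ContinuousOn (fun x => (b - x)⁻¹) (Icc a' b') :=
    (continuous_const.sub continuous_id).continuousOn.inv₀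
      (fun x hx => ne_of_gt (hbx x hx))
  have cφ : ContinuousOn φ (Icc a' b') := continuousOn_const.mul (cfb.sub cfa)
  have cψ : ContinuousOn ψ (Icc a' b') := continuousOn_const.mul ((cfb.pow 2).add (cfa.pow 2))
  have cmin : ContinuousOn (fun x => (min (x - a) (b - x))⁻¹) (Icc a' b') :=
    ((continuous_id.sub continuous_const).min
      (continuous_const.sub continuous_id)).continuousOn.inv₀
      (fun x hx => ne_of_gt (lt_min (hax x hx) (hbx x hx)))
  have cf : Continuous f := hf.continuous
  have cdf : Continuous (deriv f) := hf.continuous_deriv le_rfl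
  have hu : uIcc a' b' = Icc a' b' := uIcc_of_le hab'.le
  -- interval integrability on [a',b']
  have iA : IntervalIntegrable (fun x => (deriv f x)^2) volume a' b' :=
    ((cdf.pow 2).continuousOn).intervalIntegrable
  have iF : IntervalIntegrable (fun x => f x ^ 2) volume a' b' :=
    ((cf.pow 2).continuousOn).intervalIntegrable
  have iB : IntervalIntegrable (fun x => φ x * (2 * f x * deriv f x)) volume a' b' := by
    apply ContinuousOn.intervalIntegrable
    rw [hu]
    exact cφ.mul (((continuous_const.mul cf).mul cdf).continuousOn)
  have iD : IntervalIntegrable (fun x => (φ x * f x)^2) volume a' b' := by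
    apply ContinuousOn.intervalIntegrable
    rw [hu]
    exact (cφ.mul cf.continuousOn).pow 2
  have iE : IntervalIntegrable (fun x => ψ x * f x ^ 2) volume a' b' := by
    apply ContinuousOn.intervalIntegrable
    rw [hu]
    exact cψ.mul ((cf.pow 2).continuousOn)
  have iM : IntervalIntegrable (fun x => (min (x - a) (b - x))⁻¹ ^ 2 * f x ^ 2) volume a' b' := by
    apply ContinuousOn.intervalIntegrable
    rw [hu]
    exact (cmin.pow 2).mul ((cf.pow 2).continuousOn)
  -- integration by parts: ∫ (ψ f² + 2 φ f f') = [φ f²] = 0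
  have hFTC : (∫ x in a'..b', (ψ x * f x ^ 2 + φ x * (2 * f x * deriv f x))) = 0 := by
    have hderivG : ∀ x ∈ uIcc a' b',
        HasDerivAt (fun y => φ y * f y ^ 2)
          (ψ x * f x ^ 2 + φ x * (2 * f x * deriv f x)) x := by
      intro x hx
      rw [hu] at hx
      have hxa : x - a ≠ 0 := ne_of_gt (hax x hx)
      have hxb : b - x ≠ 0 := ne_of_gt (hbx x hx)
      have d1 : HasDerivAt (fun y => (b - y)⁻¹) (((b - x)⁻¹)^2) x := by
        have : HasDerivAt (fun y => (b - y)⁻¹) (- -1 / (b - x) ^ 2) x :=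
          ((hasDerivAt_id x).const_sub b).inv hxb
        convert this using 1
        rw [inv_pow]; ring
      have d2 : HasDerivAt (fun y => (y - a)⁻¹) (-(((x - a)⁻¹)^2)) x := by
        have : HasDerivAt (fun y => (y - a)⁻¹) (-1 / (x - a) ^ 2) x :=
          ((hasDerivAt_id x).sub_const a).inv hxa
        convert this using 1
        rw [inv_pow]; ring
      have hφd : HasDerivAt φ (ψ x) x := by
        have : HasDerivAt φ ((1:ℝ)/2 * ((b - x)⁻¹ ^ 2 - -(x - a)⁻¹ ^ 2)) x :=
          ((d1.sub d2).const_mul ((1:ℝ)/2))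
        convert this using 1
        simp only [hψdef]
        ring
      have hf2 : HasDerivAt (fun y => f y ^ 2) (2 * f x * deriv f x) x := by
        have : HasDerivAt (fun y => f y ^ 2) (((2:ℕ):ℝ) * f x ^ (2 - 1) * deriv f x) x :=
          ((hf.differentiable one_ne_zero).differentiableAt.hasDerivAt (x := x)).pow 2
        simpa [mul_comm] using this
      exact hφd.mul hf2
    have hint : IntervalIntegrable
        (fun x => ψ x * f x ^ 2 + φ x * (2 * f x * deriv f x)) volume a' b' := iE.add iB
    rw [integral_eq_sub_of_hasDerivAt hderivG hint]
    have hfa : f a' = 0 := hfz a' (by simp)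
    have hfb : f b' = 0 := hfz b' (by simp)
    rw [hfa, hfb]
    ring
  have hEB : (∫ x in a'..b', ψ x * f x ^ 2) + (∫ x in a'..b', φ x * (2 * f x * deriv f x)) = 0 := by
    rw [← integral_add iE iB]
    exact hFTC
  -- nonnegativity of ∫ (f' + φ f)²
  have h0 : 0 ≤ (∫ x in a'..b', (deriv f x)^2) +
      ((∫ x in a'..b', φ x * (2 * f x * deriv f x)) + (∫ x in a'..b', (φ x * f x)^2)) := by
    have hnn : (0:ℝ) ≤ ∫ x in a'..b', (deriv f x + φ x * f x)^2 :=
      integral_nonneg hab'.le (fun x _ => sq_nonneg _)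
    have heq : (∫ x in a'..b', (deriv f x + φ x * f x)^2) =
        ∫ x in a'..b', ((deriv f x)^2 + (φ x * (2 * f x * deriv f x) + (φ x * f x)^2)) := by
      apply intervalIntegral.integral_congr
      intro x _
      ring
    rw [heq, integral_add iA (iB.add iD), integral_add iB iD] at hnn
    exact hnn
  -- pointwise inequality integrated
  have hED : (1/4 - γ^2) * (∫ x in a'..b', (min (x - a) (b - x))⁻¹ ^ 2 * f x ^ 2) +
      (2/(b-a)^2) * (∫ x in a'..b', f x ^ 2) ≤
      (∫ x in a'..b', ψ x * f x ^ 2) - (∫ x in a'..b', (φ x * f x)^2) := by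
    have hmono : (∫ x in a'..b', ((1/4 - γ^2) * ((min (x - a) (b - x))⁻¹ ^ 2 * f x ^ 2) +
          (2/(b-a)^2) * f x ^ 2)) ≤
        ∫ x in a'..b', (ψ x * f x ^ 2 - (φ x * f x)^2) := by
      apply integral_mono_on hab'.le
      · exact (iM.const_mul _).add (iF.const_mul _)
      · exact iE.sub iD
      · intro x hx
        have hpt := stmt17_ptwise γ (x - a) (b - x) (b - a) (hax x hx) (hbx x hx) (by ring)
        have := mul_le_mul_of_nonneg_right hpt (sq_nonneg (f x))
        simp only [hφdef, hψdef]
        nlinarith [this]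
    rw [integral_add (iM.const_mul _) (iF.const_mul _), integral_sub iE iD,
      intervalIntegral.integral_const_mul, intervalIntegral.integral_const_mul] at hmono
    exact hmono
  -- reduce the integrals over (a,b) to integrals over (a',b')
  have key : ∀ g : ℝ → ℝ, IntervalIntegrable g volume a' b' →
      EqOn g 0 (Icc a a') → EqOn g 0 (Icc b' b) →
      (∫ x in a..b, g x) = ∫ x in a'..b', g x := by
    intro g hInt h1 h2
    have z1 := stmt17_zero_int g a a' ha'.le h1
    have z2 := stmt17_zero_int g b' b hb'.le h2
    have e1 : (∫ x in a..b', g x) = (∫ x in a..a', g x) + ∫ x in a'..b', g x :=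
      (integral_add_adjacent_intervals z1.1 hInt).symm
    have e2 : (∫ x in a..b, g x) = (∫ x in a..b', g x) + ∫ x in b'..b, g x :=
      (integral_add_adjacent_intervals (z1.1.trans hInt) z2.1).symm
    rw [e2, e1, z1.2, z2.2]
    ring
  have hnotL : ∀ x ∈ Icc a a', x ∉ Set.Ioo a' b' := by
    intro x hx hmem
    exact absurd hx.2 (not_le.2 hmem.1)
  have hnotR : ∀ x ∈ Icc b' b, x ∉ Set.Ioo a' b' := by
    intro x hx hmem
    exact absurd hx.1 (not_le.2 hmem.2)
  have eA : (∫ x in a..b, (deriv f x)^2) = ∫ x in a'..b', (deriv f x)^2 :=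
    key _ iA (fun x hx => by simp [hdz x (hnotL x hx)])
      (fun x hx => by simp [hdz x (hnotR x hx)])
  have eM : (∫ x in a..b, (min (x - a) (b - x))⁻¹ ^ 2 * f x ^ 2) =
      ∫ x in a'..b', (min (x - a) (b - x))⁻¹ ^ 2 * f x ^ 2 :=
    key _ iM (fun x hx => by simp [hfz x (hnotL x hx)])
      (fun x hx => by simp [hfz x (hnotR x hx)])
  have eF : (∫ x in a..b, f x ^ 2) = ∫ x in a'..b', f x ^ 2 :=
    key _ iF (fun x hx => by simp [hfz x (hnotL x hx)])
      (fun x hx => by simp [hfz x (hnotR x hx)])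
  rw [ge_iff_le, eA, eM, eF]
  linarith [h0, hEB, hED]
end

section
/- Let a < b be real numbers, m = (a+b)/2, z ∈ ℝ, and let p, q, r : ℝ → ℝ be continuous on (a,b) with p > 0 on (a,b) and symmetric about the midpoint: p(x) = p(a+b−x), q(x) = q(a+b−x), r(x) = r(a+b−x) for all x ∈ (a,b). Let (φ, Φ₁) and (θ, Θ₁) be solution pairs of −(py′)′ + (q − z r)y = 0 on (a,b) with θ(x)·Φ₁(x) − Θ₁(x)·φ(x) = 1 for all x ∈ (a,b). Set c₁ := 1 − 2θ(m)Φ₁(m) and c₂ := 2φ(m)Φ₁(m), and define Φ, Ξ : (a,b) → ℝ by Φ(x) = φ(x) and Ξ(x) = Φ₁(x) for x ∈ (a, m], and Φ(x) = c₁·φ(a+b−x) + c₂·θ(a+b−x), Ξ(x) = −c₁·Φ₁(a+b−x) − c₂·Θ₁(a+b−x) for x ∈ [m, b). Then Φ and Ξ are well defined (the two formulas agree at x = m), and (Φ, Ξ) is a solution pair of −(py′)′ + (q − z r)y = 0 on all of (a,b), i.e. for every x ∈ (a,b), Φ has derivative Ξ(x)/p(x) at x and Ξ has derivative (q(x) −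 z·r(x))·Φ(x) at x. (This is the gluing construction (4.8) of the Appendix, producing the solution of τy = zy on the full interval from the half-interval fundamental system via reflection.) -/
/-- Gluing construction (4.8) of the Appendix: for coefficient functions symmetric
about the midpoint `m = (a+b)/2`, the function `Φ` which equals `φ` on `(a, m]` and
`c₁·φ(a+b−x) + c₂·θ(a+b−x)` on `[m, b)` — with `c₁ = 1 − 2θ(m)Φ₁(m)`,
`c₂ = 2φ(m)Φ₁(m)`, and quasi-derivative `Ξ` glued accordingly — is well defined
(the two formulas agree at `m`) and is a solution pair of `−(py′)′ + (q − zr)y = 0`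
on all of `(a,b)`. -/
theorem stmt_18 (a b z : ℝ) (hab : a < b) (p q r φ Φ₁ θ Θ₁ : ℝ → ℝ)
    (hp : ContinuousOn p (Set.Ioo a b)) (hq : ContinuousOn q (Set.Ioo a b))
    (hr : ContinuousOn r (Set.Ioo a b))
    (hppos : ∀ x ∈ Set.Ioo a b, 0 < p x)
    (hpsym : ∀ x ∈ Set.Ioo a b, p x = p (a + b - x))
    (hqsym : ∀ x ∈ Set.Ioo a b, q x = q (a + b - x))
    (hrsym : ∀ x ∈ Set.Ioo a b, r x = r (a + b - x))
    (hφ : ∀ x ∈ Set.Ioo a b, HasDerivAt φ (Φ₁ x / p x) x)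
    (hΦ₁ : ∀ x ∈ Set.Ioo a b, HasDerivAt Φ₁ ((q x - z * r x) * φ x) x)
    (hθ : ∀ x ∈ Set.Ioo a b, HasDerivAt θ (Θ₁ x / p x) x)
    (hΘ₁ : ∀ x ∈ Set.Ioo a b, HasDerivAt Θ₁ ((q x - z * r x) * θ x) x)
    (hW : ∀ x ∈ Set.Ioo a b, θ x * Φ₁ x - Θ₁ x * φ x = 1) :
    let m := (a + b) / 2
    let c₁ := 1 - 2 * θ m * Φ₁ m
    let c₂ := 2 * φ m * Φ₁ m
    let Φ : ℝ → ℝ := fun x => if x ≤ m then φ x else c₁ * φ (a + b - x) + c₂ * θ (a + b - x)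
    let Ξ : ℝ → ℝ := fun x => if x ≤ m then Φ₁ x
      else -(c₁ * Φ₁ (a + b - x)) - c₂ * Θ₁ (a + b - x)
    (φ m = c₁ * φ (a + b - m) + c₂ * θ (a + b - m)) ∧
    (Φ₁ m = -(c₁ * Φ₁ (a + b - m)) - c₂ * Θ₁ (a + b - m)) ∧
    ∀ x ∈ Set.Ioo a b,
      HasDerivAt Φ (Ξ x / p x) x ∧ HasDerivAt Ξ ((q x - z * r x) * Φ x) x := by
  intro m c₁ c₂ Φ Ξ
  have hm2 : m = (a + b) / 2 := rfl
  have hρm : a + b - m = m := by rw [hm2]; ring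
  have hmm : m ∈ Set.Ioo a b := ⟨by rw [hm2]; linarith, by rw [hm2]; linarith⟩
  have hρ : ∀ x ∈ Set.Ioo a b, a + b - x ∈ Set.Ioo a b := by
    rintro x ⟨h1, h2⟩; exact ⟨by linarith, by linarith⟩
  have hc₁ : c₁ = 1 - 2 * θ m * Φ₁ m := rfl
  have hc₂ : c₂ = 2 * φ m * Φ₁ m := rfl
  have hΦdef : Φ = fun x => if x ≤ m then φ x
      else c₁ * φ (a + b - x) + c₂ * θ (a + b - x) := rfl
  have hΞdef : Ξ = fun x => if x ≤ m then Φ₁ x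
      else -(c₁ * Φ₁ (a + b - x)) - c₂ * Θ₁ (a + b - x) := rfl
  have h1 : φ m = c₁ * φ (a + b - m) + c₂ * θ (a + b - m) := by
    rw [hρm, hc₁, hc₂]; ring
  have h2 : Φ₁ m = -(c₁ * Φ₁ (a + b - m)) - c₂ * Θ₁ (a + b - m) := by
    rw [hρm, hc₁, hc₂]; linear_combination (-2 * Φ₁ m) * hW m hmm
  -- the reflected solution pair
  have hψd : ∀ x ∈ Set.Ioo a b,
      HasDerivAt (fun x => c₁ * φ (a + b - x) + c₂ * θ (a + b - x))
        ((-(c₁ * Φ₁ (a + b - x)) - c₂ * Θ₁ (a + b - x)) / p x) x := by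
    intro x hx
    have hy := hρ x hx
    have hneg : HasDerivAt (fun x : ℝ => a + b - x) (-1) x := by
      simpa using (hasDerivAt_id x).const_sub (a + b)
    have H1 := ((hφ _ hy).comp x hneg).const_mul c₁
    have H2 := ((hθ _ hy).comp x hneg).const_mul c₂
    have := H1.add H2
    refine this.congr_deriv ?_
    rw [hpsym x hx]
    have hp0 : p (a + b - x) ≠ 0 := ne_of_gt (hppos _ hy)
    field_simp
    ring
  have hΨd : ∀ x ∈ Set.Ioo a b,
      HasDerivAt (fun x => -(c₁ * Φ₁ (a + b - x)) - c₂ * Θ₁ (a + b - x))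
        ((q x - z * r x) * (c₁ * φ (a + b - x) + c₂ * θ (a + b - x))) x := by
    intro x hx
    have hy := hρ x hx
    have hneg : HasDerivAt (fun x : ℝ => a + b - x) (-1) x := by
      simpa using (hasDerivAt_id x).const_sub (a + b)
    have H1 := (((hΦ₁ _ hy).comp x hneg).const_mul c₁).neg
    have H2 := ((hΘ₁ _ hy).comp x hneg).const_mul c₂
    have := H1.sub H2
    refine this.congr_deriv ?_
    rw [hqsym x hx, hrsym x hx]
    ring
  refine ⟨h1, h2, ?_⟩
  intro x hx
  rcases lt_trichotomy x m with hlt | heq | hgt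
  · -- x < m : Φ coincides with φ near x
    have hmem : Set.Iio m ∈ nhds x := Iio_mem_nhds hlt
    have hevΦ : Φ =ᶠ[nhds x] φ :=
      Filter.eventuallyEq_of_mem hmem (fun y hy => by
        simp only [hΦdef]; exact if_pos (le_of_lt hy))
    have hevΞ : Ξ =ᶠ[nhds x] Φ₁ :=
      Filter.eventuallyEq_of_mem hmem (fun y hy => by
        simp only [hΞdef]; exact if_pos (le_of_lt hy))
    have hΞx : Ξ x = Φ₁ x := by simp only [hΞdef]; exact if_pos (le_of_lt hlt)
    have hΦx : Φ x = φ x := by simp only [hΦdef]; exact if_pos (le_of_lt hlt)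
    constructor
    · rw [hΞx]; exact (hφ x hx).congr_of_eventuallyEq hevΦ
    · rw [hΦx]; exact (hΦ₁ x hx).congr_of_eventuallyEq hevΞ
  · -- x = m : glue the two one-sided derivatives
    subst heq
    have hΞx : Ξ m = Φ₁ m := by simp only [hΞdef]; exact if_pos le_rfl
    have hΦx : Φ m = φ m := by simp only [hΦdef]; exact if_pos le_rfl
    have hΦeqIic : ∀ y ∈ Set.Iic m, Φ y = φ y := fun y hy => by
      simp only [hΦdef]; exact if_pos hy
    have hΞeqIic : ∀ y ∈ Set.Iic m, Ξ y = Φ₁ y := fun y hy => by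
      simp only [hΞdef]; exact if_pos hy
    have hΦeqIci : ∀ y ∈ Set.Ici m,
        Φ y = c₁ * φ (a + b - y) + c₂ * θ (a + b - y) := by
      intro y hy
      rcases eq_or_lt_of_le (Set.mem_Ici.mp hy) with h | h
      · subst h; simp only [hΦdef]; rw [if_pos le_rfl]; exact h1
      · simp only [hΦdef]; exact if_neg (not_le.mpr h)
    have hΞeqIci : ∀ y ∈ Set.Ici m,
        Ξ y = -(c₁ * Φ₁ (a + b - y)) - c₂ * Θ₁ (a + b - y) := by
      intro y hy
      rcases eq_or_lt_of_le (Set.mem_Ici.mp hy) with h | h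
      · subst h; simp only [hΞdef]; rw [if_pos le_rfl]; exact h2
      · simp only [hΞdef]; exact if_neg (not_le.mpr h)
    constructor
    · have hL : HasDerivWithinAt Φ (Φ₁ m / p m) (Set.Iic m) m :=
        (hφ m hmm).hasDerivWithinAt.congr hΦeqIic (hΦeqIic m Set.self_mem_Iic)
      have hR : HasDerivWithinAt Φ (Φ₁ m / p m) (Set.Ici m) m := by
        have := (hψd m hmm).hasDerivWithinAt.congr hΦeqIci (hΦeqIci m Set.self_mem_Ici)
        rwa [← h2] at this
      have := hL.union hR
      rw [Set.Iic_union_Ici, hasDerivWithinAt_univ] at this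
      rwa [hΞx]
    · have hL : HasDerivWithinAt Ξ ((q m - z * r m) * φ m) (Set.Iic m) m :=
        (hΦ₁ m hmm).hasDerivWithinAt.congr hΞeqIic (hΞeqIic m Set.self_mem_Iic)
      have hR : HasDerivWithinAt Ξ ((q m - z * r m) * φ m) (Set.Ici m) m := by
        have := (hΨd m hmm).hasDerivWithinAt.congr hΞeqIci (hΞeqIci m Set.self_mem_Ici)
        rwa [← h1] at this
      have := hL.union hR
      rw [Set.Iic_union_Ici, hasDerivWithinAt_univ] at this
      rwa [hΦx]
  · -- m < x : Φ coincides with the reflected combination near x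
    have hmem : Set.Ioi m ∈ nhds x := Ioi_mem_nhds hgt
    have hevΦ : Φ =ᶠ[nhds x]
        (fun y => c₁ * φ (a + b - y) + c₂ * θ (a + b - y)) :=
      Filter.eventuallyEq_of_mem hmem (fun y hy => by
        simp only [hΦdef]; exact if_neg (not_le.mpr hy))
    have hevΞ : Ξ =ᶠ[nhds x]
        (fun y => -(c₁ * Φ₁ (a + b - y)) - c₂ * Θ₁ (a + b - y)) :=
      Filter.eventuallyEq_of_mem hmem (fun y hy => by
        simp only [hΞdef]; exact if_neg (not_le.mpr hy))
    have hΞx : Ξ x = -(c₁ * Φ₁ (a + b - x)) - c₂ * Θ₁ (a + b - x) := by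
      simp only [hΞdef]; exact if_neg (not_le.mpr hgt)
    have hΦx : Φ x = c₁ * φ (a + b - x) + c₂ * θ (a + b - x) := by
      simp only [hΦdef]; exact if_neg (not_le.mpr hgt)
    constructor
    · rw [hΞx]; exact (hψd x hx).congr_of_eventuallyEq hevΦ
    · rw [hΦx]; exact (hΨd x hx).congr_of_eventuallyEq hevΞ
end
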